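/- arXiv:2402.03352 — 7 statements merged into one kernel-verified Lean document; each statement's English description precedes it below -/
import Mathlib

section
/- Suppose Λ = {λ ∈ ℝ^p : λ ≥ 0}, γ > 0, λ ∈ Λ, and v ∈ ℝ^p. If (1/γ)‖λ − P_Λ(λ + γ v)‖ ≤ ε, then for every index i, max{0, v_i} ≤ ε. -/
lemma max_zero_le_abs_sub_max_zero_add {a : ℝ} (ha : 0 ≤ a) (b : ℝ) :
    max 0 b ≤ |a - max 0 (a + b)| := by
  rcases le_or_gt b 0 with hb | hb
  · simp [max_eq_left hb]
  · rw [max_eq_right hb.le, max_eq_right (by linarith), sub_add_cancel_left, abs_neg,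
      abs_of_pos hb]

theorem stmt_2 (p : ℕ) (γ ε : ℝ) (hγ : 0 < γ)
    (lam v : EuclideanSpace ℝ (Fin p))
    (hlam : ∀ i, 0 ≤ lam i)
    (h : (1/γ) * ‖lam - (WithLp.equiv 2 (Fin p → ℝ)).symm
          (fun i => max 0 ((lam + γ • v) i))‖ ≤ ε) :
    ∀ i, max 0 (v i) ≤ ε := by
  intro i
  set gap := lam - (WithLp.equiv 2 (Fin p → ℝ)).symm (fun i => max 0 ((lam + γ • v) i))
  have hgap : γ * max 0 (v i) ≤ ‖gap‖ :=
    calc γ * max 0 (v i)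
      _ = max 0 (γ * v i) := by rw [mul_max_of_nonneg _ _ hγ.le, mul_zero]
      _ ≤ |lam i - max 0 (lam i + γ * v i)| := max_zero_le_abs_sub_max_zero_add (hlam i) _
      _ = ‖gap i‖ := rfl
      _ ≤ ‖gap‖ := PiLp.norm_apply_le gap i
  rw [one_div, inv_mul_le_iff₀ hγ] at h
  exact le_of_mul_le_mul_left (hgap.trans h) hγ
end

section
/- Let φ : Y → ℝ be μ-strongly convex and L-smooth on a convex compact set Y, and let y* = argmin_{y∈Y} φ(y). Define the projected-gradient residual G_β(y) = y − P_Y(y − (1/β)∇φ(y)) for β > 0. Then ‖y − y*‖ ≤ ((2β+μ)(β+L)/(μβ)) ‖G_β(y)‖ for all y ∈ Y. -/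
open scoped RealInnerProductSpace

/-!
Write `p` for the projection of `y - β⁻¹ ∇φ y` onto `Y`. Its variational inequality gives
`⟪∇φ y, p - y*⟫ ≤ β ⟪y - p, p - y*⟫`, while strong convexity and minimality of `y*` give
`μ/2 ‖p - y*‖² ≤ ⟪∇φ p, p - y*⟫`. Splitting `∇φ p = (∇φ p - ∇φ y) + ∇φ y` and using the
Lipschitz bound yields `μ ‖p - y*‖ ≤ 2 (L + β) ‖y - p‖`; the triangle inequality through `p`
then bounds `‖y - y*‖` by `(μ + 2L + 2β)/μ · ‖y - p‖`, which is at most the stated constant.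
-/

theorem ConvexOn.hasFDerivAt_apply_sub_le {E : Type*} [NormedAddCommGroup E] [NormedSpace ℝ E]
    {s : Set E} {f : E → ℝ} {f' : E →L[ℝ] ℝ} {x z : E}
    (hf : ConvexOn ℝ s f) (hx : x ∈ s) (hz : z ∈ s) (hf' : HasFDerivAt f f' x) :
    f' (z - x) ≤ f z - f x := by
  have hline : ConvexOn ℝ (AffineMap.lineMap x z ⁻¹' s) (f ∘ AffineMap.lineMap x z) :=
    hf.comp_affineMap _
  have hderiv : HasDerivAt (f ∘ AffineMap.lineMap x z) (f' (z - x)) (0 : ℝ) :=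
    hf'.comp_hasDerivAt_of_eq (0 : ℝ) AffineMap.hasDerivAt_lineMap (by simp)
  simpa [slope_def_field] using
    hline.le_slope_of_hasDerivAt (by simpa) (by simpa) zero_lt_one hderiv

section InnerProductSpace

variable {E : Type*} [NormedAddCommGroup E] [InnerProductSpace ℝ E]

theorem real_inner_sub_sub_nonpos_of_isMinOn {K : Set E} {u p w : E} (hK : Convex ℝ K)
    (hp : p ∈ K) (hmin : IsMinOn (fun z => ‖u - z‖) K p) (hw : w ∈ K) :
    ⟪u - p, w - p⟫ ≤ 0 := by
  have : Nonempty K := ⟨⟨p, hp⟩⟩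
  have hinf : ‖u - p‖ = ⨅ z : K, ‖u - z‖ :=
    le_antisymm (le_ciInf fun z => isMinOn_iff.mp hmin z z.2)
      (ciInf_le ⟨0, Set.forall_mem_range.mpr fun _ => norm_nonneg _⟩ (⟨p, hp⟩ : K))
  exact (norm_eq_iInf_iff_real_inner_le_zero hK hp).mp hinf w hw

variable [CompleteSpace E]

theorem StrongConvexOn.inner_add_le_sub_of_hasGradientAt {s : Set E} {f : E → ℝ} {m : ℝ}
    {g x z : E}
    (hf : StrongConvexOn s m f) (hx : x ∈ s) (hz : z ∈ s) (hg : HasGradientAt f g x) :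
    ⟪g, z - x⟫ + m / 2 * ‖z - x‖ ^ 2 ≤ f z - f x := by
  have hconv := strongConvexOn_iff_convex.mp hf
  have hderiv := hg.hasFDerivAt.sub (((hasStrictFDerivAt_norm_sq x).hasFDerivAt).const_mul (m / 2))
  have key := hconv.hasFDerivAt_apply_sub_le hx hz hderiv
  simp only [sub_apply, InnerProductSpace.toDual_apply_apply, smul_apply, coe_innerSL_apply,
    nsmul_eq_mul, Nat.cast_ofNat, smul_eq_mul] at key
  have hsq : ‖z - x‖ ^ 2 = ‖z‖ ^ 2 - ‖x‖ ^ 2 - 2 * ⟪x, z - x⟫ := by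
    rw [norm_sub_sq_real, inner_sub_right, real_inner_self_eq_norm_sq, real_inner_comm]
    ring
  rw [hsq]
  linarith

theorem StrongConvexOn.mul_sq_le_inner_gradient_of_isMinOn {s : Set E} {f : E → ℝ} {m : ℝ}
    {a x : E}
    (hf : StrongConvexOn s m f) (hmin : IsMinOn f s a) (ha : a ∈ s) (hx : x ∈ s)
    (hdiff : DifferentiableAt ℝ f x) :
    m / 2 * ‖x - a‖ ^ 2 ≤ ⟪gradient f x, x - a⟫ := by
  have h := hf.inner_add_le_sub_of_hasGradientAt hx ha hdiff.hasGradientAt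
  rw [← neg_sub x a, inner_neg_right, norm_neg] at h
  linarith [isMinOn_iff.mp hmin x hx]

theorem StrongConvexOn.mul_norm_sub_le_of_isMinOn_proj {Y : Set E} {φ : E → ℝ} {μ L β : ℝ}
    {ystar y p : E} (hY : Convex ℝ Y) (hφ : StrongConvexOn Y μ φ)
    (hlip : ∀ u v, ‖gradient φ u - gradient φ v‖ ≤ L * ‖u - v‖) (hL : 0 ≤ L) (hβ : 0 < β)
    (hmin : IsMinOn φ Y ystar) (hystar : ystar ∈ Y) (hp : p ∈ Y)
    (hdiff : DifferentiableAt ℝ φ p)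
    (hproj : IsMinOn (fun z => ‖y - β⁻¹ • gradient φ y - z‖) Y p) :
    μ * ‖p - ystar‖ ≤ 2 * (L + β) * ‖y - p‖ := by
  have hvi := real_inner_sub_sub_nonpos_of_isMinOn hY hp hproj hystar
  have hstep : ⟪gradient φ y, p - ystar⟫ ≤ β * ⟪y - p, p - ystar⟫ := by
    rw [sub_right_comm, inner_sub_left, real_inner_smul_left, ← neg_sub p ystar, inner_neg_right,
      inner_neg_right] at hvi
    calc ⟪gradient φ y, p - ystar⟫ = β * (β⁻¹ * ⟪gradient φ y, p - ystar⟫) := by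
          rw [mul_inv_cancel_left₀ hβ.ne']
      _ ≤ β * ⟪y - p, p - ystar⟫ := by gcongr; linarith
  have hsc := hφ.mul_sq_le_inner_gradient_of_isMinOn hmin hystar hp hdiff
  have hgrad : ⟪gradient φ p - gradient φ y, p - ystar⟫ ≤ L * ‖y - p‖ * ‖p - ystar‖ :=
    calc ⟪gradient φ p - gradient φ y, p - ystar⟫
        ≤ ‖gradient φ p - gradient φ y‖ * ‖p - ystar‖ := real_inner_le_norm _ _
      _ ≤ L * ‖y - p‖ * ‖p - ystar‖ := by
          rw [norm_sub_rev y p]; gcongr; exact hlip p y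
  have hcs : ⟪y - p, p - ystar⟫ ≤ ‖y - p‖ * ‖p - ystar‖ := real_inner_le_norm _ _
  rw [inner_sub_left] at hgrad
  have hquad : μ / 2 * ‖p - ystar‖ ^ 2 ≤ (L + β) * ‖y - p‖ * ‖p - ystar‖ := by
    nlinarith [mul_le_mul_of_nonneg_left hcs hβ.le]
  rcases (norm_nonneg (p - ystar)).eq_or_lt with h0 | hpos
  · rw [← h0, mul_zero]
    positivity
  · refine le_of_mul_le_mul_right ?_ hpos
    nlinarith [hquad]

end InnerProductSpace

theorem stmt_5_general (dy : ℕ) (Y : Set (EuclideanSpace ℝ (Fin dy)))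
    (hYcv : Convex ℝ Y)
    (φ : EuclideanSpace ℝ (Fin dy) → ℝ) (μ L β : ℝ)
    (hμ : 0 < μ) (hL : 0 < L) (hβ : 0 < β)
    (hsc : StrongConvexOn Y μ φ)
    (hdiff : Differentiable ℝ φ)
    (hlip : ∀ y z, ‖gradient φ y - gradient φ z‖ ≤ L * ‖y - z‖)
    (ystar : EuclideanSpace ℝ (Fin dy)) (hystarY : ystar ∈ Y)
    (hmin : ∀ y ∈ Y, φ ystar ≤ φ y)
    (y : EuclideanSpace ℝ (Fin dy))
    (py : EuclideanSpace ℝ (Fin dy)) (hpyY : py ∈ Y)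
    (hproj : ∀ z ∈ Y, ‖(y - (1/β) • gradient φ y) - py‖ ≤ ‖(y - (1/β) • gradient φ y) - z‖) :
    ‖y - ystar‖ ≤ ((2*β + μ) * (β + L) / (μ * β)) * ‖y - py‖ := by
  have hdist : μ * ‖py - ystar‖ ≤ 2 * (L + β) * ‖y - py‖ :=
    hsc.mul_norm_sub_le_of_isMinOn_proj hYcv hlip hL.le hβ (isMinOn_iff.mpr hmin) hystarY hpyY
      (hdiff py) (isMinOn_iff.mpr (by simpa only [one_div] using hproj))
  have htri : ‖y - ystar‖ ≤ ‖y - py‖ + ‖py - ystar‖ := norm_sub_le_norm_sub_add_norm_sub _ _ _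
  rw [div_mul_eq_mul_div, le_div_iff₀ (by positivity)]
  nlinarith [mul_le_mul_of_nonneg_left htri (by positivity : (0:ℝ) ≤ μ * β),
    mul_le_mul_of_nonneg_left hdist hβ.le,
    mul_nonneg (mul_nonneg hμ.le hL.le) (norm_nonneg (y - py))]

theorem stmt_5 (dy : ℕ) (Y : Set (EuclideanSpace ℝ (Fin dy)))
    (hYcv : Convex ℝ Y) (hYcp : IsCompact Y) (hYne : Y.Nonempty)
    (φ : EuclideanSpace ℝ (Fin dy) → ℝ) (μ L β : ℝ)
    (hμ : 0 < μ) (hL : 0 < L) (hβ : 0 < β)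
    (hsc : StrongConvexOn Y μ φ)
    (hdiff : Differentiable ℝ φ)
    (hlip : ∀ y z, ‖gradient φ y - gradient φ z‖ ≤ L * ‖y - z‖)
    (ystar : EuclideanSpace ℝ (Fin dy)) (hystarY : ystar ∈ Y)
    (hmin : ∀ y ∈ Y, φ ystar ≤ φ y)
    (y : EuclideanSpace ℝ (Fin dy)) (hy : y ∈ Y)
    (py : EuclideanSpace ℝ (Fin dy)) (hpyY : py ∈ Y)
    (hproj : ∀ z ∈ Y, ‖(y - (1/β) • gradient φ y) - py‖ ≤ ‖(y - (1/β) • gradient φ y) - z‖) :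
    ‖y - ystar‖ ≤ ((2*β + μ) * (β + L) / (μ * β)) * ‖y - py‖ :=
  stmt_5_general dy Y hYcv φ μ L β hμ hL hβ hsc hdiff hlip ystar hystarY hmin y py hpyY hproj
end

section
/- Let L(x,·,λ) have L-Lipschitz gradient in y on a convex set Y, and let y⁺ = P_Y(y + (1/β) ĝ) with β > 0, where ĝ is any vector satisfying ‖ĝ − ∇_y L(x,y,λ)‖ ≤ δ with δ² ≤ d_y L² θ²/4. Then L(x,y⁺,λ) − L(x,y,λ) ≥ (β − L)‖y⁺ − y‖² − d_y L θ²/8. -/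
open InnerProductSpace intervalIntegral

local notation "⟪" x ", " y "⟫" => @inner ℝ _ _ x y

set_option maxHeartbeats 1000000 in
theorem stmt_8 (d : ℕ) (Y : Set (EuclideanSpace ℝ (Fin d))) (hYcv : Convex ℝ Y)
    (F : EuclideanSpace ℝ (Fin d) → ℝ) (L β θ : ℝ)
    (hL : 0 < L) (hβ : 0 < β)
    (hdiff : Differentiable ℝ F)
    (hlip : ∀ u v, ‖gradient F u - gradient F v‖ ≤ L * ‖u - v‖)
    (y ghat yplus : EuclideanSpace ℝ (Fin d)) (hy : y ∈ Y) (hyp : yplus ∈ Y)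
    (hproj : ∀ z ∈ Y, ‖(y + (1/β) • ghat) - yplus‖ ≤ ‖(y + (1/β) • ghat) - z‖)
    (herr : ‖ghat - gradient F y‖^2 ≤ d * L^2 * θ^2 / 4) :
    F yplus - F y ≥ (β - L) * ‖yplus - y‖^2 - d * L * θ^2 / 8 := by
  set v := yplus - y with hv
  -- continuity of the gradient
  have hgradcont : Continuous fun u => gradient F u := by
    refine (LipschitzWith.of_dist_le_mul (K := L.toNNReal) fun a b => ?_).continuous
    rw [dist_eq_norm, dist_eq_norm, Real.coe_toNNReal _ hL.le]
    exact hlip a b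
  -- derivative of t ↦ F (y + t • v)
  have hderiv : ∀ t : ℝ, HasDerivAt (fun t : ℝ => F (y + t • v))
      ⟪gradient F (y + t • v), v⟫ t := by
    intro t
    have h1 : HasDerivAt (fun t : ℝ => y + t • v) v t := by
      simpa using ((hasDerivAt_id t).smul_const v).const_add y
    have h2 := ((hdiff (y + t • v)).hasGradientAt.hasFDerivAt).comp t h1.hasFDerivAt
    have := h2.hasDerivAt
    simpa [InnerProductSpace.toDual_apply_apply, Function.comp_def] using this
  have hcont : Continuous fun t : ℝ => ⟪gradient F (y + t • v), v⟫ := by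
    exact (hgradcont.comp (by continuity)).inner continuous_const
  -- fundamental theorem of calculus
  have hFTC : F yplus - F y = ∫ t in (0:ℝ)..1, ⟪gradient F (y + t • v), v⟫ := by
    have := intervalIntegral.integral_eq_sub_of_hasDerivAt (f := fun t : ℝ => F (y + t • v))
      (a := 0) (b := 1) (fun t _ => hderiv t)
      (hcont.intervalIntegrable 0 1)
    simp only [zero_smul, add_zero, one_smul] at this
    rw [this]
    congr 2 <;> simp [hv]
  -- lower bound on the integrand
  have hbound : ∀ t ∈ Set.Icc (0:ℝ) 1,
      ⟪gradient F y, v⟫ - t * (L * ‖v‖^2) ≤ ⟪gradient F (y + t • v), v⟫ := by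
    intro t ht
    have h1 : ⟪gradient F (y + t • v) - gradient F y, v⟫ ≥
        -(‖gradient F (y + t • v) - gradient F y‖ * ‖v‖) := by
      have := abs_real_inner_le_norm (gradient F (y + t • v) - gradient F y) v
      linarith [neg_abs_le ⟪gradient F (y + t • v) - gradient F y, v⟫]
    have h2 : ‖gradient F (y + t • v) - gradient F y‖ ≤ L * (t * ‖v‖) := by
      have := hlip (y + t • v) y
      simpa [norm_smul, abs_of_nonneg ht.1] using this
    have h3 : ‖gradient F (y + t • v) - gradient F y‖ * ‖v‖ ≤ L * (t * ‖v‖) * ‖v‖ :=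
      mul_le_mul_of_nonneg_right h2 (norm_nonneg v)
    have h4 : ⟪gradient F (y + t • v), v⟫ = ⟪gradient F y, v⟫ +
        ⟪gradient F (y + t • v) - gradient F y, v⟫ := by
      rw [inner_sub_left]; ring
    rw [h4]; nlinarith [sq_nonneg ‖v‖]
  have hint : (∫ t in (0:ℝ)..1, (⟪gradient F y, v⟫ - t * (L * ‖v‖^2))) ≤
      ∫ t in (0:ℝ)..1, ⟪gradient F (y + t • v), v⟫ := by
    refine intervalIntegral.integral_mono_on zero_le_one ?_ (hcont.intervalIntegrable 0 1) hbound
    exact (Continuous.intervalIntegrable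
      (continuous_const.sub (continuous_id.mul continuous_const)) 0 1)
  have hint2 : (∫ t in (0:ℝ)..1, (⟪gradient F y, v⟫ - t * (L * ‖v‖^2)))
      = ⟪gradient F y, v⟫ - L / 2 * ‖v‖^2 := by
    rw [intervalIntegral.integral_sub intervalIntegrable_const
      ((intervalIntegral.intervalIntegrable_id).mul_const _),
      intervalIntegral.integral_mul_const, integral_id]
    simp; ring
  have hdescent : F yplus - F y ≥ ⟪gradient F y, v⟫ - L / 2 * ‖v‖^2 := by
    rw [hFTC, ← hint2]; exact hint
  -- projection step: ⟪ghat, v⟫ ≥ β ‖v‖²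
  have hvar : ∀ w ∈ Y, ⟪(y + (1/β) • ghat) - yplus, w - yplus⟫ ≤ 0 := by
    haveI : Nonempty Y := ⟨⟨y, hy⟩⟩
    have : ‖(y + (1/β) • ghat) - yplus‖ = ⨅ w : Y, ‖(y + (1/β) • ghat) - w‖ := by
      refine le_antisymm (le_ciInf fun w => hproj w w.2) ?_
      exact ciInf_le ⟨0, by rintro _ ⟨w, rfl⟩; exact norm_nonneg _⟩ (⟨yplus, hyp⟩ : Y)
    exact (norm_eq_iInf_iff_real_inner_le_zero hYcv hyp).mp this
  have hkey : ⟪ghat, v⟫ ≥ β * ‖v‖^2 := by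
    have h := hvar y hy
    have hexp : (y + (1/β) • ghat) - yplus = (1/β) • ghat - v := by
      rw [hv]; abel
    rw [hexp, hv] at h
    have h' : ⟪(1/β) • ghat - (yplus - y), -(yplus - y)⟫ ≤ 0 := by
      convert h using 2; abel
    rw [inner_neg_right, inner_sub_left, real_inner_smul_left,
      real_inner_self_eq_norm_sq] at h'
    have h'' : ‖yplus - y‖^2 ≤ 1/β * ⟪ghat, yplus - y⟫ := by linarith
    have h3 : β * ‖yplus - y‖^2 ≤ β * (1/β * ⟪ghat, yplus - y⟫) :=
      mul_le_mul_of_nonneg_left h'' hβ.le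
    have h4 : β * (1/β * ⟪ghat, yplus - y⟫) = ⟪ghat, yplus - y⟫ := by
      field_simp
    rw [hv]; rw [h4] at h3; linarith
  -- error term: ⟪gradient F y - ghat, v⟫ ≥ - (L/2)‖v‖² - d L θ²/8
  have herr2 : ⟪gradient F y - ghat, v⟫ ≥ -(L / 2 * ‖v‖^2) - d * L * θ^2 / 8 := by
    set e := gradient F y - ghat with he
    have h1 : ⟪e, v⟫ ≥ -(‖e‖ * ‖v‖) := by
      have := abs_real_inner_le_norm e v
      linarith [neg_abs_le ⟪e, v⟫]
    have hamgm : ‖e‖ * ‖v‖ ≤ ‖e‖^2 / (2 * L) + L / 2 * ‖v‖^2 := by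
      rw [← sub_nonneg]
      have heq : ‖e‖^2 / (2 * L) + L / 2 * ‖v‖^2 - ‖e‖ * ‖v‖
          = (‖e‖ - L * ‖v‖)^2 / (2 * L) := by
        field_simp; ring
      rw [heq]; positivity
    have hee : ‖e‖^2 ≤ d * L^2 * θ^2 / 4 := by
      rw [he, ← norm_neg]; simpa [neg_sub] using herr
    have : ‖e‖^2 / (2 * L) ≤ d * L * θ^2 / 8 := by
      rw [div_le_iff₀ (by positivity)]
      nlinarith
    linarith
  have hsplit : ⟪gradient F y, v⟫ = ⟪ghat, v⟫ + ⟪gradient F y - ghat, v⟫ := by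
    rw [inner_sub_left]; ring
  have : ⟪gradient F y, v⟫ ≥ β * ‖v‖^2 - L / 2 * ‖v‖^2 - d * L * θ^2 / 8 := by
    rw [hsplit]; linarith
  calc F yplus - F y ≥ ⟪gradient F y, v⟫ - L / 2 * ‖v‖^2 := hdescent
    _ ≥ (β - L) * ‖v‖^2 - d * L * θ^2 / 8 := by nlinarith [sq_nonneg ‖v‖]
end

section
/- Let L̃_k(x,y,λ) = L(x,y,λ) − (ρ_k/2)‖y‖², Ψ_k(x,λ) = max_{y∈Y} L̃_k(x,y,λ), and M_k(x,y,λ) = 2Ψ_k(x,λ) − L̃_k(x,y,λ), where {ρ_k} is nonnegative and monotonically decreasing and Y is convex compact with σ_y = max{‖y‖ : y ∈ Y}. Then for all (x,y,λ), M_{k+1}(x,y,λ) − M_k(x,y,λ) ≤ (ρ_k − ρ_{k+1}) σ_y². -/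
/- Lowering the regularization from `ρ k` to `ρ (k+1)` raises `L̃` by `c ‖y‖²` with
`c = (ρ k - ρ (k+1)) / 2`, an amount in `[0, c σ_y²]` on `Y`. Hence `Ψ` rises by at most
`c σ_y²`, while the `- L̃` part of `M` only drops; together `M` rises by at most `2 c σ_y²`. -/

/-- No boundedness is assumed: if `f '' Y` is unbounded then so is `g '' Y`, and both suprema
are the junk value `0`. -/
theorem Real.sSup_image_le_sSup_image_add {α : Type*} {Y : Set α} {f g : α → ℝ} {c : ℝ}
    (hc : 0 ≤ c) (hfg : ∀ y ∈ Y, f y ≤ g y) (hgf : ∀ y ∈ Y, g y ≤ f y + c) :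
    sSup (g '' Y) ≤ sSup (f '' Y) + c := by
  by_cases hbdd : BddAbove (f '' Y)
  · rcases Y.eq_empty_or_nonempty with rfl | hne
    · simpa using hc
    refine csSup_le (hne.image g) ?_
    rintro _ ⟨y, hy, rfl⟩
    exact (hgf y hy).trans (add_le_add_left (le_csSup hbdd ⟨y, hy, rfl⟩) c)
  · have hgbdd : ¬ BddAbove (g '' Y) := fun ⟨b, hb⟩ =>
      hbdd ⟨b, by rintro _ ⟨y, hy, rfl⟩; exact (hfg y hy).trans (hb ⟨y, hy, rfl⟩)⟩
    simpa [Real.sSup_of_not_bddAbove hbdd, Real.sSup_of_not_bddAbove hgbdd] using hc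

theorem stmt_12_general (dx dy p : ℕ)
    (Y : Set (EuclideanSpace ℝ (Fin dy)))
    (Lag : EuclideanSpace ℝ (Fin dx) → EuclideanSpace ℝ (Fin dy) →
      EuclideanSpace ℝ (Fin p) → ℝ)
    (ρ : ℕ → ℝ) (hρmono : ∀ k, ρ (k+1) ≤ ρ k)
    (σy : ℝ) (hσy : ∀ y ∈ Y, ‖y‖ ≤ σy)
    (Lt : ℕ → EuclideanSpace ℝ (Fin dx) → EuclideanSpace ℝ (Fin dy) →
      EuclideanSpace ℝ (Fin p) → ℝ)
    (hLt : ∀ k x y lam, Lt k x y lam = Lag x y lam - ρ k / 2 * ‖y‖^2)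
    (Ψ : ℕ → EuclideanSpace ℝ (Fin dx) → EuclideanSpace ℝ (Fin p) → ℝ)
    (hΨ : ∀ k x lam, Ψ k x lam = sSup {z : ℝ | ∃ y ∈ Y, z = Lt k x y lam})
    (M : ℕ → EuclideanSpace ℝ (Fin dx) → EuclideanSpace ℝ (Fin dy) →
      EuclideanSpace ℝ (Fin p) → ℝ)
    (hM : ∀ k x y lam, M k x y lam = 2 * Ψ k x lam - Lt k x y lam)
    (k : ℕ) (x : EuclideanSpace ℝ (Fin dx)) (lam : EuclideanSpace ℝ (Fin p)) :
    ∀ y ∈ Y, M (k+1) x y lam - M k x y lam ≤ (ρ k - ρ (k+1)) * σy^2 := by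
  intro y hy
  set c := (ρ k - ρ (k+1)) / 2
  have hc : 0 ≤ c := div_nonneg (sub_nonneg.2 (hρmono k)) zero_le_two
  have hLt_succ : ∀ y', Lt (k+1) x y' lam = Lt k x y' lam + c * ‖y'‖ ^ 2 := fun y' => by
    rw [hLt, hLt]; ring
  have hsq : ∀ y' ∈ Y, ‖y'‖ ^ 2 ≤ σy ^ 2 := fun y' hy' =>
    pow_le_pow_left₀ (norm_nonneg _) (hσy y' hy') 2
  have hΨ_eq : ∀ j, Ψ j x lam = sSup ((fun y' => Lt j x y' lam) '' Y) := fun j => by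
    rw [hΨ]; congr 1; ext z; simp only [Set.mem_ofPred_eq, Set.mem_image, eq_comm]
  have hΨ_succ : Ψ (k+1) x lam ≤ Ψ k x lam + c * σy ^ 2 := by
    rw [hΨ_eq, hΨ_eq]
    refine Real.sSup_image_le_sSup_image_add (mul_nonneg hc (sq_nonneg σy))
      (fun y' _ => ?_) (fun y' hy' => ?_) <;> rw [hLt_succ]
    · exact le_add_of_nonneg_right (mul_nonneg hc (sq_nonneg _))
    · exact add_le_add le_rfl (mul_le_mul_of_nonneg_left (hsq y' hy') hc)
  have hσ : (ρ k - ρ (k+1)) * σy ^ 2 = 2 * (c * σy ^ 2) := by ring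
  rw [hM, hM, hLt_succ, hσ]
  linarith [mul_nonneg hc (sq_nonneg ‖y‖)]

theorem stmt_12 (dx dy p : ℕ)
    (Y : Set (EuclideanSpace ℝ (Fin dy)))
    (hYne : Y.Nonempty) (hYcp : IsCompact Y) (hYcv : Convex ℝ Y)
    (Lag : EuclideanSpace ℝ (Fin dx) → EuclideanSpace ℝ (Fin dy) →
      EuclideanSpace ℝ (Fin p) → ℝ)
    (hLcont : ∀ x lam, Continuous (fun y => Lag x y lam))
    (ρ : ℕ → ℝ) (hρ0 : ∀ k, 0 ≤ ρ k) (hρmono : ∀ k, ρ (k+1) ≤ ρ k)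
    (σy : ℝ) (hσy : ∀ y ∈ Y, ‖y‖ ≤ σy)
    (Lt : ℕ → EuclideanSpace ℝ (Fin dx) → EuclideanSpace ℝ (Fin dy) →
      EuclideanSpace ℝ (Fin p) → ℝ)
    (hLt : ∀ k x y lam, Lt k x y lam = Lag x y lam - ρ k / 2 * ‖y‖^2)
    (Ψ : ℕ → EuclideanSpace ℝ (Fin dx) → EuclideanSpace ℝ (Fin p) → ℝ)
    (hΨ : ∀ k x lam, Ψ k x lam = sSup {z : ℝ | ∃ y ∈ Y, z = Lt k x y lam})
    (M : ℕ → EuclideanSpace ℝ (Fin dx) → EuclideanSpace ℝ (Fin dy) →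
      EuclideanSpace ℝ (Fin p) → ℝ)
    (hM : ∀ k x y lam, M k x y lam = 2 * Ψ k x lam - Lt k x y lam)
    (k : ℕ) (x : EuclideanSpace ℝ (Fin dx)) (lam : EuclideanSpace ℝ (Fin p)) :
    ∀ y ∈ Y, M (k+1) x y lam - M k x y lam ≤ (ρ k - ρ (k+1)) * σy^2 :=
  stmt_12_general dx dy p Y Lag ρ hρmono σy hσy Lt hLt Ψ hΨ M hM k x lam
end

section
/- Let g : Y → ℝ be concave with L-Lipschitz gradient on convex compact Y and let g_ρ(y) = g(y) − (ρ/2)‖y‖². If y_ρ* = argmax_{y∈Y} g_ρ(y) and y_σ* = argmax_{y∈Y} g_σ(y) with 0 < σ ≤ ρ, then ‖y_σ* − y_ρ*‖² ≤ ((ρ − σ)/σ)(‖y_σ*‖² − ‖y_ρ*‖²). -/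
/-! `g - (σ/2)‖·‖²` is `σ`-strongly concave, so from its maximum at `yσ` it drops by at least
`(σ/2)‖yσ - yρ‖²` at `yρ`; optimality of `yρ` for the `ρ`-problem bounds that same drop by
`((ρ - σ)/2)(‖yσ‖² - ‖yρ‖²)`. -/

open Filter Topology

theorem UniformConcaveOn.le_sub_of_isMaxOn {E : Type*} [NormedAddCommGroup E] [NormedSpace ℝ E]
    {s : Set E} {φ : ℝ → ℝ} {f : E → ℝ} {x y : E} (hf : UniformConcaveOn s φ f) (hxs : x ∈ s)
    (hx : IsMaxOn f s x) (hy : y ∈ s) : φ ‖y - x‖ ≤ f x - f y := by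
  -- Compare `f x` with `f` at the points `t • y + (1 - t) • x` and let `t → 0⁺`.
  have hbound : ∀ t ∈ Set.Ioo (0 : ℝ) 1, (1 - t) * φ ‖y - x‖ ≤ f x - f y := by
    rintro t ⟨ht₀, ht₁⟩
    have hcomb := hf.2 hy hxs ht₀.le (sub_nonneg.2 ht₁.le) (add_sub_cancel t 1)
    have hmax : f (t • y + (1 - t) • x) ≤ f x :=
      hx (hf.1 hy hxs ht₀.le (sub_nonneg.2 ht₁.le) (add_sub_cancel t 1))
    rw [smul_eq_mul, smul_eq_mul] at hcomb
    refine le_of_mul_le_mul_left ?_ ht₀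
    linarith
  have hlim : Tendsto (fun t : ℝ ↦ (1 - t) * φ ‖y - x‖) (𝓝[>] 0) (𝓝 (φ ‖y - x‖)) := by
    refine (Continuous.tendsto' ?_ 0 _ (by simp)).mono_left nhdsWithin_le_nhds
    fun_prop
  refine le_of_tendsto hlim ?_
  filter_upwards [Ioo_mem_nhdsGT one_pos] using hbound

theorem stmt_13_general (d : ℕ) (Y : Set (EuclideanSpace ℝ (Fin d)))
    (g : EuclideanSpace ℝ (Fin d) → ℝ) (ρ σ : ℝ)
    (hσ : 0 < σ)
    (hconc : ConcaveOn ℝ Y g)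
    (yρ yσ : EuclideanSpace ℝ (Fin d)) (hyρY : yρ ∈ Y) (hyσY : yσ ∈ Y)
    (hyρ : ∀ y ∈ Y, g y - ρ/2 * ‖y‖^2 ≤ g yρ - ρ/2 * ‖yρ‖^2)
    (hyσ : ∀ y ∈ Y, g y - σ/2 * ‖y‖^2 ≤ g yσ - σ/2 * ‖yσ‖^2) :
    ‖yσ - yρ‖^2 ≤ ((ρ - σ)/σ) * (‖yσ‖^2 - ‖yρ‖^2) := by
  set gσ : EuclideanSpace ℝ (Fin d) → ℝ := fun y ↦ g y - σ / 2 * ‖y‖ ^ 2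
  have hstrong : StrongConcaveOn Y σ gσ := by
    rw [strongConcaveOn_iff_convex]
    simpa [gσ] using hconc
  have hgrowth : σ / 2 * ‖yρ - yσ‖ ^ 2 ≤ gσ yσ - gσ yρ :=
    UniformConcaveOn.le_sub_of_isMaxOn hstrong hyσY hyσ hyρY
  have hρopt := hyρ yσ hyσY
  rw [norm_sub_rev] at hgrowth
  rw [div_mul_eq_mul_div, le_div_iff₀ hσ]
  simp only [gσ] at hgrowth
  linarith

theorem stmt_13 (d : ℕ) (Y : Set (EuclideanSpace ℝ (Fin d)))
    (hYne : Y.Nonempty) (hYcp : IsCompact Y) (hYcv : Convex ℝ Y)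
    (g : EuclideanSpace ℝ (Fin d) → ℝ) (L ρ σ : ℝ)
    (hσ : 0 < σ) (hσρ : σ ≤ ρ)
    (hconc : ConcaveOn ℝ Y g) (hdiff : Differentiable ℝ g)
    (hlip : ∀ u v, ‖gradient g u - gradient g v‖ ≤ L * ‖u - v‖)
    (yρ yσ : EuclideanSpace ℝ (Fin d)) (hyρY : yρ ∈ Y) (hyσY : yσ ∈ Y)
    (hyρ : ∀ y ∈ Y, g y - ρ/2 * ‖y‖^2 ≤ g yρ - ρ/2 * ‖yρ‖^2)
    (hyσ : ∀ y ∈ Y, g y - σ/2 * ‖y‖^2 ≤ g yσ - σ/2 * ‖yσ‖^2) :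
    ‖yσ - yρ‖^2 ≤ ((ρ - σ)/σ) * (‖yσ‖^2 - ‖yρ‖^2) :=
  stmt_13_general d Y g ρ σ hσ hconc yρ yσ hyρY hyσY hyρ hyσ
end

section
/- Let φ : Y → ℝ be μ-strongly concave with L-Lipschitz gradient on convex compact Y, y* = argmax φ, and consider the momentum-projected step ỹ⁺ = P_Y(y + β̃ w), y⁺ = y + η(ỹ⁺ − y) with 0 < η ≤ 1 and 0 < β̃ ≤ 1/(6L), where w satisfies ‖w − ĝ‖ is the estimator error and ĝ approximates ∇φ(y) with ‖ĝ − ∇φ(y)‖² ≤ d L²θ²/4. Then ‖y⁺ − y*‖² ≤ (1 − ηβ̃μ/2)‖y − y*‖² − (3η/4)‖ỹ⁺ − y‖² + (8ηβ̃/μ)‖ĝ − w‖² + 2ηβ̃ d L²θ²/(4μ)·4, i.e., ‖y⁺ − y*‖² ≤ (1 − ηβ̃μ/2)‖y − y*‖² − (3η/4)‖ỹ⁺ − y‖² + (8ηβ̃/μ)‖ĝ − w‖² + (2ηβ̃/μ) d L²θ². -/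
/-!
The projection `ỹ⁺` of `y + β̃ w` onto `Y` satisfies the variational inequality
`⟪y + β̃ w - ỹ⁺, y* - ỹ⁺⟫ ≤ 0`, i.e.
`‖ỹ⁺ - y*‖² ≤ ‖y - y*‖² - ‖ỹ⁺ - y‖² + 2β̃ ⟪w, ỹ⁺ - y*⟫`.
Split `w = ∇φ(y) + (w - ∇φ(y))`. The exact-gradient part is bounded by `L`-smoothness along
`y → ỹ⁺`, `μ`-strong concavity along `y → y*` and `φ(ỹ⁺) ≤ φ(y*)`; the error part by Young's
inequality with weight `μ/4`, the resulting `‖ỹ⁺ - y*‖²` being absorbed through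
`‖ỹ⁺ - y*‖² ≤ 2‖ỹ⁺ - y‖² + 2‖y - y*‖²`. Finally `y⁺` is a convex combination of `y` and `ỹ⁺`,
and `β̃L, β̃μ ≤ 1/6` leave a coefficient of at least `3η/4` in front of `‖ỹ⁺ - y‖²`.
-/

open Set Filter Topology
open scoped InnerProductSpace

section Projection

variable {F : Type*} [NormedAddCommGroup F] [InnerProductSpace ℝ F]

theorem real_inner_sub_sub_nonpos_of_forall_norm_sub_le {K : Set F} (hK : Convex ℝ K)
    {p q : F} (hq : q ∈ K) (hmin : ∀ z ∈ K, ‖p - q‖ ≤ ‖p - z‖) {z : F} (hz : z ∈ K) :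
    ⟪p - q, z - q⟫_ℝ ≤ 0 := by
  have : Nonempty K := ⟨⟨q, hq⟩⟩
  refine (norm_eq_iInf_iff_real_inner_le_zero hK hq).mp ?_ z hz
  exact le_antisymm (le_ciInf fun w => hmin w w.2)
    (ciInf_le ⟨0, forall_mem_range.2 fun _ => norm_nonneg _⟩ (⟨q, hq⟩ : K))

theorem norm_sub_sq_le_of_forall_norm_sub_le {K : Set F} (hK : Convex ℝ K) {y w q z : F}
    {β : ℝ} (hq : q ∈ K) (hmin : ∀ z ∈ K, ‖y + β • w - q‖ ≤ ‖y + β • w - z‖) (hz : z ∈ K) :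
    ‖q - z‖ ^ 2 ≤ ‖y - z‖ ^ 2 - ‖q - y‖ ^ 2 + 2 * β * ⟪w, q - z⟫_ℝ := by
  have hvi := real_inner_sub_sub_nonpos_of_forall_norm_sub_le hK hq hmin hz
  have hyz : y - z = (q - z) - (q - y) := by abel
  have hstep : y + β • w - q = β • w - (q - y) := by abel
  rw [hstep, ← neg_sub q z, inner_neg_right, inner_sub_left, real_inner_smul_left] at hvi
  rw [hyz, norm_sub_sq_real (q - z) (q - y), real_inner_comm]
  linarith

theorem norm_add_smul_sq (a b : F) (t : ℝ) :
    ‖a + t • b‖ ^ 2 = (1 - t) * ‖a‖ ^ 2 + t * ‖a + b‖ ^ 2 - t * (1 - t) * ‖b‖ ^ 2 := by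
  rw [norm_add_sq_real, norm_add_sq_real, inner_smul_right, norm_smul, Real.norm_eq_abs,
    mul_pow, sq_abs]
  ring

end Projection

theorem two_mul_le_sq_div_add_mul_sq {a b c : ℝ} (hc : 0 < c) :
    2 * a * b ≤ a ^ 2 / c + c * b ^ 2 := by
  rw [div_add' _ _ _ hc.ne', le_div_iff₀ hc]
  nlinarith [sq_nonneg (a - c * b)]

section Gradient

variable {E : Type*} [NormedAddCommGroup E] [InnerProductSpace ℝ E] [CompleteSpace E]

theorem HasGradientAt.hasDerivAt_comp_add_smul {f : E → ℝ} {f' x v : E} {t : ℝ}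
    (hf : HasGradientAt f f' (x + t • v)) :
    HasDerivAt (fun s : ℝ => f (x + s • v)) ⟪f', v⟫_ℝ t := by
  have hline : HasDerivAt (fun s : ℝ => x + s • v) v t := by
    simpa using ((hasDerivAt_id t).smul_const v).const_add x
  simpa [InnerProductSpace.toDual_apply_apply, Function.comp_def] using
    hf.hasFDerivAt.comp_hasDerivAt t hline

theorem StrongConcaveOn.le_add_inner_sub {s : Set E} {m : ℝ} {f : E → ℝ} {f' x z : E}
    (hf : StrongConcaveOn s m f) (hx : x ∈ s) (hz : z ∈ s) (hf' : HasGradientAt f f' x) :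
    f z ≤ f x + ⟪f', z - x⟫_ℝ - m / 2 * ‖z - x‖ ^ 2 := by
  set v := z - x
  set F : ℝ → ℝ := fun t => f (x + t • v)
  have hslope : Tendsto (slope F 0) (𝓝[>] 0) (𝓝 ⟪f', v⟫_ℝ) :=
    (hasDerivAt_iff_tendsto_slope.mp
      (HasGradientAt.hasDerivAt_comp_add_smul (t := 0) (v := v) (by simpa))).mono_left
      (nhdsWithin_mono 0 fun t ht => ne_of_gt ht)
  have hbound : Tendsto (fun t : ℝ => f z - f x + m / 2 * (1 - t) * ‖v‖ ^ 2) (𝓝[>] 0)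
      (𝓝 (f z - f x + m / 2 * ‖v‖ ^ 2)) := by
    have : Continuous fun t : ℝ => f z - f x + m / 2 * (1 - t) * ‖v‖ ^ 2 := by fun_prop
    simpa using (this.tendsto 0).mono_left nhdsWithin_le_nhds
  have hchord : ∀ᶠ t in 𝓝[>] (0 : ℝ), f z - f x + m / 2 * (1 - t) * ‖v‖ ^ 2 ≤ slope F 0 t := by
    filter_upwards [Ioo_mem_nhdsGT (show (0 : ℝ) < 1 by norm_num)] with t ⟨ht0, ht1⟩
    have hconc := hf.2 hz hx ht0.le (sub_nonneg.2 ht1.le) (add_sub_cancel t 1)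
    have hpt : t • z + (1 - t) • x = x + t • v := by simp only [v]; module
    rw [hpt, smul_eq_mul, smul_eq_mul] at hconc
    beta_reduce at hconc
    rw [slope_def_field, le_div_iff₀ (by linarith)]
    simp only [F, zero_smul, add_zero]
    nlinarith
  linarith [le_of_tendsto_of_tendsto hbound hslope hchord]

theorem le_apply_add_of_lipschitz_gradient {f : E → ℝ} {L : ℝ} (hf : Differentiable ℝ f)
    (hL : ∀ u v, ‖gradient f u - gradient f v‖ ≤ L * ‖u - v‖) (x u : E) :
    f x + ⟪gradient f x, u⟫_ℝ - L / 2 * ‖u‖ ^ 2 ≤ f (x + u) := by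
  set H : ℝ → ℝ := fun t => f (x + t • u) - t * ⟪gradient f x, u⟫_ℝ + L / 2 * ‖u‖ ^ 2 * t ^ 2
  set H' : ℝ → ℝ := fun t =>
    ⟪gradient f (x + t • u) - gradient f x, u⟫_ℝ + L * t * ‖u‖ ^ 2
  have hH : ∀ t, HasDerivAt H (H' t) t := by
    intro t
    refine ((((hf (x + t • u)).hasGradientAt.hasDerivAt_comp_add_smul).sub
      ((hasDerivAt_id t).mul_const ⟪gradient f x, u⟫_ℝ)).add
      ((hasDerivAt_pow 2 t).const_mul (L / 2 * ‖u‖ ^ 2))).congr_deriv ?_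
    simp only [H', inner_sub_left]
    push_cast
    ring
  have hH'_nonneg : ∀ t ∈ interior (Icc (0 : ℝ) 1), 0 ≤ H' t := by
    intro t ht
    rw [interior_Icc] at ht
    have hlip : ‖gradient f (x + t • u) - gradient f x‖ ≤ L * (t * ‖u‖) := by
      simpa [norm_smul, abs_of_pos ht.1] using hL (x + t • u) x
    have hcs := abs_real_inner_le_norm (gradient f (x + t • u) - gradient f x) u
    have := mul_le_mul_of_nonneg_right hlip (norm_nonneg u)
    simp only [H']
    nlinarith [neg_abs_le ⟪gradient f (x + t • u) - gradient f x, u⟫_ℝ]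
  have hmono : MonotoneOn H (Icc 0 1) :=
    monotoneOn_of_hasDerivWithinAt_nonneg (convex_Icc 0 1)
      (fun t _ => (hH t).continuousAt.continuousWithinAt) (fun t _ => (hH t).hasDerivWithinAt)
      hH'_nonneg
  have := hmono (left_mem_Icc.2 zero_le_one) (right_mem_Icc.2 zero_le_one) zero_le_one
  simp only [H, zero_smul, add_zero, one_smul] at this
  linarith

theorem inner_gradient_sub_le_of_strongConcaveOn {Y : Set E} {f : E → ℝ} {μ L : ℝ}
    (hf : StrongConcaveOn Y μ f) (hdiff : Differentiable ℝ f)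
    (hL : ∀ u v, ‖gradient f u - gradient f v‖ ≤ L * ‖u - v‖)
    {y q ystar : E} (hy : y ∈ Y) (hystar : ystar ∈ Y) (hq : f q ≤ f ystar) :
    ⟪gradient f y, q - ystar⟫_ℝ ≤ L / 2 * ‖q - y‖ ^ 2 - μ / 2 * ‖y - ystar‖ ^ 2 := by
  have hsmooth := le_apply_add_of_lipschitz_gradient hdiff hL y (q - y)
  have hconc := hf.le_add_inner_sub hy hystar (hdiff y).hasGradientAt
  rw [add_sub_cancel] at hsmooth
  have hsplit : ⟪gradient f y, q - ystar⟫_ℝ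
      = ⟪gradient f y, q - y⟫_ℝ - ⟪gradient f y, ystar - y⟫_ℝ := by
    rw [← inner_sub_right, sub_sub_sub_cancel_right]
  rw [norm_sub_rev ystar y] at hconc
  linarith

theorem norm_projected_ascent_sub_sq_le {Y : Set E} (hY : Convex ℝ Y) {f : E → ℝ}
    {μ L β : ℝ} (hμ : 0 < μ) (hβ : 0 ≤ β) (hf : StrongConcaveOn Y μ f)
    (hdiff : Differentiable ℝ f) (hL : ∀ u v, ‖gradient f u - gradient f v‖ ≤ L * ‖u - v‖)
    {y w q ystar : E} (hy : y ∈ Y) (hq : q ∈ Y) (hystar : ystar ∈ Y) (hfq : f q ≤ f ystar)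
    (hproj : ∀ z ∈ Y, ‖y + β • w - q‖ ≤ ‖y + β • w - z‖) :
    ‖q - ystar‖ ^ 2 ≤ (1 - β * μ / 2) * ‖y - ystar‖ ^ 2
      - (1 - β * L - β * μ / 2) * ‖q - y‖ ^ 2 + 4 * β / μ * ‖w - gradient f y‖ ^ 2 := by
  have hstep := norm_sub_sq_le_of_forall_norm_sub_le hY hq hproj hystar
  have hgrad := inner_gradient_sub_le_of_strongConcaveOn hf hdiff hL hy hystar hfq
  have hnoise : 2 * ⟪w - gradient f y, q - ystar⟫_ℝ
      ≤ 4 / μ * ‖w - gradient f y‖ ^ 2 + μ / 4 * ‖q - ystar‖ ^ 2 := by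
    have hyoung := two_mul_le_sq_div_add_mul_sq (a := ‖w - gradient f y‖) (b := ‖q - ystar‖)
      (by positivity : 0 < μ / 4)
    rw [div_div_eq_mul_div, mul_comm, mul_div_assoc] at hyoung
    linarith [real_inner_le_norm (w - gradient f y) (q - ystar)]
  have htri : ‖q - ystar‖ ^ 2 ≤ 2 * (‖q - y‖ ^ 2 + ‖y - ystar‖ ^ 2) :=
    (pow_le_pow_left₀ (norm_nonneg _) (norm_sub_le_norm_sub_add_norm_sub q y ystar) 2).trans
      add_sq_le
  rw [← sub_add_cancel w (gradient f y), inner_add_left] at hstep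
  linear_combination hstep + 2 * mul_le_mul_of_nonneg_left hgrad hβ
    + mul_le_mul_of_nonneg_left hnoise hβ
    + mul_le_mul_of_nonneg_left htri (by positivity : 0 ≤ β * μ / 4)

end Gradient

theorem stmt_14_general (d : ℕ) (Y : Set (EuclideanSpace ℝ (Fin d)))
    (hYcv : Convex ℝ Y)
    (φ : EuclideanSpace ℝ (Fin d) → ℝ) (μ L θ βt η : ℝ)
    (hμ : 0 < μ) (hμL : μ ≤ L)
    (hη : 0 < η) (hη1 : η ≤ 1) (hβ : 0 < βt) (hβL : βt ≤ 1/(6*L))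
    (hsc : StrongConcaveOn Y μ φ)
    (hdiff : Differentiable ℝ φ)
    (hlip : ∀ u v, ‖gradient φ u - gradient φ v‖ ≤ L * ‖u - v‖)
    (ystar : EuclideanSpace ℝ (Fin d)) (hystarY : ystar ∈ Y)
    (hmax : ∀ y ∈ Y, φ y ≤ φ ystar)
    (y w ghat ytp : EuclideanSpace ℝ (Fin d)) (hy : y ∈ Y) (hytp : ytp ∈ Y)
    (hproj : ∀ z ∈ Y, ‖(y + βt • w) - ytp‖ ≤ ‖(y + βt • w) - z‖)
    (herr : ‖ghat - gradient φ y‖^2 ≤ d * L^2 * θ^2 / 4) :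
    ‖(y + η • (ytp - y)) - ystar‖^2 ≤
      (1 - η * βt * μ / 2) * ‖y - ystar‖^2 - (3*η/4) * ‖ytp - y‖^2
      + (8*η*βt/μ) * ‖ghat - w‖^2 + (2*η*βt/μ) * d * L^2 * θ^2 := by
  have hβL6 : βt * (6 * L) ≤ 1 := (le_div_iff₀ (by linarith)).mp hβL
  have hβμ : βt * μ ≤ βt * L := mul_le_mul_of_nonneg_left hμL hβ.le
  have hascent := norm_projected_ascent_sub_sq_le hYcv hμ hβ.le hsc hdiff hlip hy hytp hystarY
    (hmax ytp hytp) hproj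
  have hbias : ‖w - gradient φ y‖ ^ 2 ≤ 2 * (‖ghat - w‖ ^ 2 + ‖ghat - gradient φ y‖ ^ 2) := by
    rw [norm_sub_rev ghat w]
    exact (pow_le_pow_left₀ (norm_nonneg _) (norm_sub_le_norm_sub_add_norm_sub _ _ _) 2).trans
      add_sq_le
  have hgap : 0 ≤ η * ‖ytp - y‖ ^ 2 * (1 / 4 - βt * L - βt * μ / 2 + (1 - η)) :=
    mul_nonneg (by positivity) (by linarith)
  rw [show y + η • (ytp - y) - ystar = (y - ystar) + η • (ytp - y) by abel, norm_add_smul_sq,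
    show y - ystar + (ytp - y) = ytp - ystar by abel]
  linear_combination η * hascent + (4 * η * βt / μ) * hbias + (8 * η * βt / μ) * herr + hgap

theorem stmt_14 (d : ℕ) (Y : Set (EuclideanSpace ℝ (Fin d)))
    (hYcv : Convex ℝ Y) (hYcp : IsCompact Y) (hYne : Y.Nonempty)
    (φ : EuclideanSpace ℝ (Fin d) → ℝ) (μ L θ βt η : ℝ)
    (hμ : 0 < μ) (hμL : μ ≤ L) (hL : 0 < L)
    (hη : 0 < η) (hη1 : η ≤ 1) (hβ : 0 < βt) (hβL : βt ≤ 1/(6*L))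
    (hsc : StrongConcaveOn Y μ φ)
    (hdiff : Differentiable ℝ φ)
    (hlip : ∀ u v, ‖gradient φ u - gradient φ v‖ ≤ L * ‖u - v‖)
    (ystar : EuclideanSpace ℝ (Fin d)) (hystarY : ystar ∈ Y)
    (hmax : ∀ y ∈ Y, φ y ≤ φ ystar)
    (y w ghat ytp : EuclideanSpace ℝ (Fin d)) (hy : y ∈ Y) (hytp : ytp ∈ Y)
    (hproj : ∀ z ∈ Y, ‖(y + βt • w) - ytp‖ ≤ ‖(y + βt • w) - z‖)
    (herr : ‖ghat - gradient φ y‖^2 ≤ d * L^2 * θ^2 / 4) :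
    ‖(y + η • (ytp - y)) - ystar‖^2 ≤
      (1 - η * βt * μ / 2) * ‖y - ystar‖^2 - (3*η/4) * ‖ytp - y‖^2
      + (8*η*βt/μ) * ‖ghat - w‖^2 + (2*η*βt/μ) * d * L^2 * θ^2 :=
  stmt_14_general d Y hYcv φ μ L θ βt η hμ hμL hη hη1 hβ hβL hsc hdiff hlip ystar hystarY hmax y w
    ghat ytp hy hytp hproj herr
end

section
/- Let v_{k+1} = ĝ_{k+1}(z_{k+1}) + (1−ϱ)(v_k − ĝ_k(z_k)) be a STORM-type variance-reduced estimator, where ĝ_k(z) is an unbiased mini-batch estimate (batch size b) of a deterministic quantity ḡ_k(z), each sample estimate has variance at most δ², and ‖g_{k+1}^{(ζ)}(z_{k+1}) − g_k^{(ζ)}(z_k)‖² ≤ Δ_k² almost surely for per-sample maps with bounded finite-difference bias ≤ ε_fd per evaluation. Then E‖ḡ_{k+1}(z_{k+1}) − v_{k+1}‖² ≤ (1−ϱ) E‖ḡ_k(z_k) − v_k‖² + (2/b)Δ_k² + 2ϱ²δ²/b. -/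
open MeasureTheory ProbabilityTheory

open scoped RealInnerProductSpace

/-!
The new error splits as `ḡ_{k+1} - v_{k+1} = (1 - ϱ)(ḡ_k - v_k) + b⁻¹ ∑ⱼ Yⱼ` with per-sample
errors `Yⱼ = (ḡ_{k+1} - g_{k+1}^{(j)}) - (1 - ϱ)(ḡ_k - g_k^{(j)})`. These are centred, pairwise
independent and independent of `v_k`, so every cross term vanishes in expectation and
`E‖ḡ_{k+1} - v_{k+1}‖² = (1 - ϱ)² E‖ḡ_k - v_k‖² + b⁻² ∑ⱼ E‖Yⱼ‖²`. With the drift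
`Dⱼ = g_{k+1}^{(j)} - g_k^{(j)}` one has `Yⱼ = ϱ(ḡ_{k+1} - g_{k+1}^{(j)}) - (1 - ϱ)(Dⱼ - E Dⱼ)`, so
`E‖Yⱼ‖² ≤ 2ϱ²δ² + 2 E‖Dⱼ‖² ≤ 2ϱ²δ² + 2Δ²`; finally `(1 - ϱ)² ≤ 1 - ϱ`.
-/

lemma norm_sub_sq_le_two_mul {F : Type*} [SeminormedAddCommGroup F] (x y : F) :
    ‖x - y‖ ^ 2 ≤ 2 * ‖x‖ ^ 2 + 2 * ‖y‖ ^ 2 := by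
  nlinarith [norm_sub_le x y, norm_nonneg (x - y), sq_nonneg (‖x‖ - ‖y‖)]

lemma norm_momentum_sample_error_sq_le {F : Type*} [SeminormedAddCommGroup F] [NormedSpace ℝ F]
    (ϱ : ℝ) (u v x y : F) :
    ‖(u - x) - (1 - ϱ) • (v - y)‖ ^ 2
      ≤ 2 * ϱ ^ 2 * ‖x - u‖ ^ 2 + 2 * (1 - ϱ) ^ 2 * ‖(x - y) - (u - v)‖ ^ 2 := by
  have hsplit : (u - x) - (1 - ϱ) • (v - y) = ϱ • (u - x) - (1 - ϱ) • ((x - y) - (u - v)) := by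
    module
  rw [hsplit]
  refine (norm_sub_sq_le_two_mul _ _).trans_eq ?_
  simp only [norm_smul, mul_pow, Real.norm_eq_abs, sq_abs, norm_sub_rev u x]
  ring

lemma sub_momentum_update_eq {E : Type*} [AddCommGroup E] [Module ℝ E] {n : ℕ} (hn : n ≠ 0)
    (ϱ : ℝ) (g₁ g₂ v : E) (x₁ x₂ : Fin n → E) :
    g₂ - ((1 / (n : ℝ)) • ∑ j, x₂ j + (1 - ϱ) • (v - (1 / (n : ℝ)) • ∑ j, x₁ j))
      = (1 - ϱ) • (g₁ - v) + (1 / (n : ℝ)) • ∑ j, ((g₂ - x₂ j) - (1 - ϱ) • (g₁ - x₁ j)) := by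
  have hsum : ∑ j, ((g₂ - x₂ j) - (1 - ϱ) • (g₁ - x₁ j))
      = (n : ℝ) • g₂ - ∑ j, x₂ j - (1 - ϱ) • ((n : ℝ) • g₁ - ∑ j, x₁ j) := by
    simp only [Finset.sum_sub_distrib, ← Finset.smul_sum, smul_sub, Finset.sum_const,
      Finset.card_univ, Fintype.card_fin, Nat.cast_smul_eq_nsmul]
  rw [hsum]
  match_scalars <;> field_simp
  ring

section

variable {Ω : Type*} [MeasurableSpace Ω] {μ : Measure Ω}

lemma integral_norm_smul_sq {F : Type*} [NormedAddCommGroup F] [NormedSpace ℝ F] (c : ℝ)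
    (X : Ω → F) :
    ∫ ω, ‖c • X ω‖ ^ 2 ∂μ = c ^ 2 * ∫ ω, ‖X ω‖ ^ 2 ∂μ := by
  simp only [norm_smul, mul_pow, Real.norm_eq_abs, sq_abs, integral_const_mul]

lemma MeasureTheory.memLp_two_of_integrable_norm_sub_sq {F : Type*} [NormedAddCommGroup F]
    [IsFiniteMeasure μ] {X : Ω → F} {c : F} (hX : AEStronglyMeasurable X μ)
    (h : Integrable (fun ω ↦ ‖X ω - c‖ ^ 2) μ) :
    MemLp X 2 μ := by
  have hcentered := (memLp_two_iff_integrable_sq_norm (hX.sub aestronglyMeasurable_const)).2 h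
  simpa using hcentered.add (memLp_const c)

lemma MeasureTheory.MemLp.of_ae_norm_sub_sq_le {F : Type*} [NormedAddCommGroup F]
    [IsFiniteMeasure μ] {U V : Ω → F} {C : ℝ} (hU : MemLp U 2 μ) (hV : AEStronglyMeasurable V μ)
    (h : ∀ᵐ ω ∂μ, ‖U ω - V ω‖ ^ 2 ≤ C ^ 2) :
    MemLp V 2 μ := by
  have hdiff : MemLp (U - V) 2 μ := .of_bound (hU.1.sub hV) |C| <| by
    filter_upwards [h] with ω hω
    simpa using sq_le_sq.1 hω
  simpa using hU.sub hdiff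

variable {E : Type*} [NormedAddCommGroup E] [InnerProductSpace ℝ E]

lemma MeasureTheory.MemLp.integrable_inner {X Y : Ω → E} (hX : MemLp X 2 μ) (hY : MemLp Y 2 μ) :
    Integrable (fun ω ↦ ⟪X ω, Y ω⟫) μ :=
  (L2.integrable_inner (hX.toLp X) (hY.toLp Y)).congr <| by
    filter_upwards [hX.coeFn_toLp, hY.coeFn_toLp] with ω hXω hYω
    rw [hXω, hYω]

lemma MeasureTheory.integral_norm_add_sq_of_integral_inner_eq_zero {X Y : Ω → E}
    (hX : MemLp X 2 μ) (hY : MemLp Y 2 μ) (hXY : ∫ ω, ⟪X ω, Y ω⟫ ∂μ = 0) :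
    ∫ ω, ‖X ω + Y ω‖ ^ 2 ∂μ = ∫ ω, ‖X ω‖ ^ 2 ∂μ + ∫ ω, ‖Y ω‖ ^ 2 ∂μ := by
  simp_rw [norm_add_sq_real]
  have hX2 := hX.integrable_norm_pow two_ne_zero
  have hcross := (hX.integrable_inner hY).const_mul 2
  rw [integral_add (hX2.fun_add hcross) (hY.integrable_norm_pow two_ne_zero),
    integral_add hX2 hcross, integral_const_mul, hXY, mul_zero, add_zero]

lemma MeasureTheory.integral_norm_sum_sq_of_pairwise_integral_inner_eq_zero {ι : Type*}
    {Y : ι → Ω → E} (hY : ∀ j, MemLp (Y j) 2 μ)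
    (hYY : Pairwise fun j l ↦ ∫ ω, ⟪Y j ω, Y l ω⟫ ∂μ = 0) (s : Finset ι) :
    ∫ ω, ‖∑ j ∈ s, Y j ω‖ ^ 2 ∂μ = ∑ j ∈ s, ∫ ω, ‖Y j ω‖ ^ 2 ∂μ := by
  classical
  induction s using Finset.induction_on with
  | empty => simp
  | insert a s has ih =>
    have hcross : ∫ ω, ⟪Y a ω, ∑ j ∈ s, Y j ω⟫ ∂μ = 0 := by
      simp_rw [inner_sum]
      rw [integral_finsetSum s fun j _ ↦ (hY a).integrable_inner (hY j)]
      exact Finset.sum_eq_zero fun j hj ↦ hYY (ne_of_mem_of_not_mem hj has).symm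
    simp_rw [Finset.sum_insert has]
    rw [integral_norm_add_sq_of_integral_inner_eq_zero (hY a)
      (memLp_finsetSum s fun j _ ↦ hY j) hcross, ih]

variable [CompleteSpace E]

lemma MeasureTheory.integral_norm_sub_integral_sq_le [IsProbabilityMeasure μ] {X : Ω → E}
    (hX : MemLp X 2 μ) :
    ∫ ω, ‖X ω - μ[X]‖ ^ 2 ∂μ ≤ ∫ ω, ‖X ω‖ ^ 2 ∂μ := by
  have hcentered : MemLp (fun ω ↦ X ω - μ[X]) 2 μ := hX.sub (memLp_const _)
  have hcross : ∫ ω, ⟪μ[X], X ω - μ[X]⟫ ∂μ = 0 := by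
    rw [integral_inner (hcentered.integrable one_le_two),
      integral_sub (hX.integrable one_le_two) (integrable_const _), integral_const,
      probReal_univ, one_smul, sub_self, inner_zero_right]
  have hpyth := integral_norm_add_sq_of_integral_inner_eq_zero (memLp_const _) hcentered hcross
  simp only [add_sub_cancel, integral_const, probReal_univ, one_smul] at hpyth
  rw [hpyth]
  exact le_add_of_nonneg_left (sq_nonneg _)

lemma integral_momentum_sample_error_eq_zero [IsProbabilityMeasure μ] {U V : Ω → E} {u v : E}
    (hU : Integrable U μ) (hV : Integrable V μ) (hu : μ[U] = u) (hv : μ[V] = v) (ϱ : ℝ) :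
    ∫ ω, (u - U ω) - (1 - ϱ) • (v - V ω) ∂μ = 0 := by
  have hUc : Integrable (fun ω ↦ u - U ω) μ := (integrable_const _).sub hU
  have hVc : Integrable (fun ω ↦ (1 - ϱ) • (v - V ω)) μ := ((integrable_const _).sub hV).smul _
  rw [integral_sub hUc hVc, integral_smul, integral_sub (integrable_const _) hU,
    integral_sub (integrable_const _) hV, hu, hv]
  simp

lemma integral_norm_momentum_sample_error_sq_le [IsProbabilityMeasure μ] {U V : Ω → E} {u v : E}
    {ϱ δ Δ : ℝ} (hU : MemLp U 2 μ) (hV : MemLp V 2 μ) (hu : μ[U] = u) (hv : μ[V] = v)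
    (hϱ0 : 0 ≤ ϱ) (hϱ1 : ϱ ≤ 1) (hvar : ∫ ω, ‖U ω - u‖ ^ 2 ∂μ ≤ δ ^ 2)
    (hdrift : ∀ᵐ ω ∂μ, ‖U ω - V ω‖ ^ 2 ≤ Δ ^ 2) :
    ∫ ω, ‖(u - U ω) - (1 - ϱ) • (v - V ω)‖ ^ 2 ∂μ ≤ 2 * ϱ ^ 2 * δ ^ 2 + 2 * Δ ^ 2 := by
  have hD : MemLp (fun ω ↦ U ω - V ω) 2 μ := hU.sub hV
  have hμD : μ[fun ω ↦ U ω - V ω] = u - v := by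
    rw [integral_sub (hU.integrable one_le_two) (hV.integrable one_le_two), hu, hv]
  have hvarD : ∫ ω, ‖(U ω - V ω) - (u - v)‖ ^ 2 ∂μ ≤ Δ ^ 2 := by
    refine hμD ▸ (integral_norm_sub_integral_sq_le hD).trans ?_
    exact (integral_mono_ae (hD.integrable_norm_pow two_ne_zero) (integrable_const _)
      hdrift).trans_eq (by simp)
  have hUc2 : Integrable (fun ω ↦ ‖U ω - u‖ ^ 2) μ :=
    (hU.sub (memLp_const u)).integrable_norm_pow two_ne_zero
  have hDc2 : Integrable (fun ω ↦ ‖(U ω - V ω) - (u - v)‖ ^ 2) μ :=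
    (hD.sub (memLp_const (u - v))).integrable_norm_pow two_ne_zero
  calc _ ≤ ∫ ω, (2 * ϱ ^ 2 * ‖U ω - u‖ ^ 2 + 2 * (1 - ϱ) ^ 2 * ‖(U ω - V ω) - (u - v)‖ ^ 2) ∂μ :=
        integral_mono ((((memLp_const u).sub hU).sub
          (((memLp_const v).sub hV).const_smul (1 - ϱ))).integrable_norm_pow two_ne_zero)
          ((hUc2.const_mul _).fun_add (hDc2.const_mul _))
          fun ω ↦ norm_momentum_sample_error_sq_le ϱ u v (U ω) (V ω)
    _ = 2 * ϱ ^ 2 * ∫ ω, ‖U ω - u‖ ^ 2 ∂μ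
          + 2 * (1 - ϱ) ^ 2 * ∫ ω, ‖(U ω - V ω) - (u - v)‖ ^ 2 ∂μ := by
        rw [integral_add (hUc2.const_mul _) (hDc2.const_mul _), integral_const_mul,
          integral_const_mul]
    _ ≤ 2 * ϱ ^ 2 * δ ^ 2 + 2 * 1 * Δ ^ 2 := by
        gcongr
        exact pow_le_one₀ (sub_nonneg.2 hϱ1) (by linarith)
    _ = _ := by ring

variable [MeasurableSpace E] [BorelSpace E]

lemma ProbabilityTheory.IndepFun.integral_inner {X Y : Ω → E} (hXY : X ⟂ᵢ[μ] Y)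
    (hX : Integrable X μ) (hY : Integrable Y μ) :
    ∫ ω, ⟪X ω, Y ω⟫ ∂μ = ⟪μ[X], μ[Y]⟫ :=
  hXY.integral_bilin hX hY (innerSL ℝ)

lemma ProbabilityTheory.integral_norm_sum_sq_of_pairwise_indepFun [IsFiniteMeasure μ] {ι : Type*}
    {Y : ι → Ω → E} (hY : ∀ j, MemLp (Y j) 2 μ) (hY0 : ∀ j, μ[Y j] = 0)
    (hYY : Pairwise fun j l ↦ Y j ⟂ᵢ[μ] Y l) (s : Finset ι) :
    ∫ ω, ‖∑ j ∈ s, Y j ω‖ ^ 2 ∂μ = ∑ j ∈ s, ∫ ω, ‖Y j ω‖ ^ 2 ∂μ :=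
  integral_norm_sum_sq_of_pairwise_integral_inner_eq_zero hY (fun j l hjl ↦
    ((hYY hjl).integral_inner ((hY j).integrable one_le_two) ((hY l).integrable one_le_two)).trans
      <| by rw [hY0 l, inner_zero_right]) s

lemma ProbabilityTheory.integral_norm_add_sum_sq_of_indepFun [IsFiniteMeasure μ] {ι : Type*}
    {X : Ω → E} {Y : ι → Ω → E} (hX : MemLp X 2 μ) (hY : ∀ j, MemLp (Y j) 2 μ)
    (hY0 : ∀ j, μ[Y j] = 0) (hXY : ∀ j, X ⟂ᵢ[μ] Y j) (hYY : Pairwise fun j l ↦ Y j ⟂ᵢ[μ] Y l)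
    (s : Finset ι) :
    ∫ ω, ‖X ω + ∑ j ∈ s, Y j ω‖ ^ 2 ∂μ = ∫ ω, ‖X ω‖ ^ 2 ∂μ + ∑ j ∈ s, ∫ ω, ‖Y j ω‖ ^ 2 ∂μ := by
  have hcross : ∫ ω, ⟪X ω, ∑ j ∈ s, Y j ω⟫ ∂μ = 0 := by
    simp_rw [inner_sum]
    rw [integral_finsetSum s fun j _ ↦ hX.integrable_inner (hY j)]
    refine Finset.sum_eq_zero fun j _ ↦ ?_
    rw [(hXY j).integral_inner (hX.integrable one_le_two) ((hY j).integrable one_le_two), hY0 j,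
      inner_zero_right]
  rw [integral_norm_add_sq_of_integral_inner_eq_zero hX (memLp_finsetSum s fun j _ ↦ hY j) hcross,
    integral_norm_sum_sq_of_pairwise_indepFun hY hY0 hYY]

lemma integral_norm_sub_momentum_update_sq [SecondCountableTopology E] [IsProbabilityMeasure μ]
    {n : ℕ} (hn : n ≠ 0) (ϱ : ℝ) {G₁ G₂ : Fin n → Ω → E} {g₁ g₂ : E} {v : Ω → E}
    (hG₁ : ∀ j, MemLp (G₁ j) 2 μ) (hG₂ : ∀ j, MemLp (G₂ j) 2 μ) (hv : MemLp (fun ω ↦ g₁ - v ω) 2 μ)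
    (hunb₁ : ∀ j, μ[G₁ j] = g₁) (hunb₂ : ∀ j, μ[G₂ j] = g₂)
    (hpair : Pairwise fun j l ↦
      (fun ω ↦ (G₁ j ω, G₂ j ω)) ⟂ᵢ[μ] (fun ω ↦ (G₁ l ω, G₂ l ω)))
    (hindep : ∀ j, v ⟂ᵢ[μ] fun ω ↦ (G₁ j ω, G₂ j ω)) :
    ∫ ω, ‖g₂ - ((1 / (n : ℝ)) • ∑ j, G₂ j ω + (1 - ϱ) • (v ω - (1 / (n : ℝ)) • ∑ j, G₁ j ω))‖ ^ 2 ∂μ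
      = (1 - ϱ) ^ 2 * ∫ ω, ‖g₁ - v ω‖ ^ 2 ∂μ
        + (1 / (n : ℝ)) ^ 2 * ∑ j, ∫ ω, ‖(g₂ - G₂ j ω) - (1 - ϱ) • (g₁ - G₁ j ω)‖ ^ 2 ∂μ := by
  set φ : E × E → E := fun p ↦ (1 / (n : ℝ)) • ((g₂ - p.2) - (1 - ϱ) • (g₁ - p.1))
  have hφ : Measurable φ := by
    simp only [φ]
    fun_prop
  set Y : Fin n → Ω → E := fun j ω ↦ φ (G₁ j ω, G₂ j ω)
  have hY : ∀ j, MemLp (Y j) 2 μ := fun j ↦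
    (((memLp_const g₂).sub (hG₂ j)).sub
      (((memLp_const g₁).sub (hG₁ j)).const_smul (1 - ϱ))).const_smul _
  have hY0 : ∀ j, μ[Y j] = 0 := fun j ↦ by
    rw [integral_smul, integral_momentum_sample_error_eq_zero ((hG₂ j).integrable one_le_two)
      ((hG₁ j).integrable one_le_two) (hunb₂ j) (hunb₁ j) ϱ, smul_zero]
  have hXY : ∀ j, (fun ω ↦ (1 - ϱ) • (g₁ - v ω)) ⟂ᵢ[μ] Y j := fun j ↦
    (hindep j).comp (φ := fun x ↦ (1 - ϱ) • (g₁ - x)) (by fun_prop) hφ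
  have hYY : Pairwise fun j l ↦ Y j ⟂ᵢ[μ] Y l := fun j l hjl ↦ (hpair hjl).comp hφ hφ
  calc _ = ∫ ω, ‖(1 - ϱ) • (g₁ - v ω) + ∑ j, Y j ω‖ ^ 2 ∂μ := by
        congr 1 with ω
        rw [sub_momentum_update_eq hn, Finset.smul_sum]
    _ = _ := by
        have hX : MemLp (fun ω ↦ (1 - ϱ) • (g₁ - v ω)) 2 μ := hv.const_smul (1 - ϱ)
        rw [integral_norm_add_sum_sq_of_indepFun hX hY hY0 hXY hYY,
          integral_norm_smul_sq, Finset.mul_sum]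
        simp only [Y, φ, integral_norm_smul_sq]

end

-- `G₁ j`, `G₂ j`: the `j`-th sample estimates at `z_k`, `z_{k+1}`; `vold = v_k`, `vnew = v_{k+1}`.
theorem stmt_18_general {Ω : Type*} [MeasurableSpace Ω] (μ : Measure Ω) [IsProbabilityMeasure μ]
    (d b : ℕ) (hb : 0 < b) (δ Δ ϱ : ℝ)
    (hϱ0 : 0 < ϱ) (hϱ1 : ϱ ≤ 1)
    (G₁ G₂ : Fin b → Ω → EuclideanSpace ℝ (Fin d))
    (gbar₁ gbar₂ : EuclideanSpace ℝ (Fin d))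
    (vold : Ω → EuclideanSpace ℝ (Fin d))
    (hmeasv : Measurable vold)
    (hint₁ : ∀ j, Integrable (G₁ j) μ) (hint₂ : ∀ j, Integrable (G₂ j) μ)
    (hintv2 : Integrable (fun ω => ‖gbar₁ - vold ω‖^2) μ)
    (hint2₂ : ∀ j, Integrable (fun ω => ‖G₂ j ω - gbar₂‖^2) μ)
    -- conditional (here: full) unbiasedness of the per-sample estimates
    (hunb₁ : ∀ j, ∫ ω, G₁ j ω ∂μ = gbar₁)
    (hunb₂ : ∀ j, ∫ ω, G₂ j ω ∂μ = gbar₂)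
    -- per-sample variance bound
    (hvar : ∀ j, ∫ ω, ‖G₂ j ω - gbar₂‖^2 ∂μ ≤ δ^2)
    -- almost-sure bound on the per-sample drift between consecutive iterates
    (hdrift : ∀ j, ∀ᵐ ω ∂μ, ‖G₂ j ω - G₁ j ω‖^2 ≤ Δ^2)
    -- the per-sample pairs are jointly independent across the batch
    (hiid : iIndepFun
      (fun j => fun ω => (G₁ j ω, G₂ j ω)) μ)
    -- the fresh batch is independent of the previous estimator
    (hindep : IndepFun vold (fun ω => fun j : Fin b => (G₁ j ω, G₂ j ω)) μ)
    (vnew : Ω → EuclideanSpace ℝ (Fin d))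
    (hvnew : ∀ ω, vnew ω
      = (1/(b:ℝ)) • ∑ j, G₂ j ω
        + (1 - ϱ) • (vold ω - (1/(b:ℝ)) • ∑ j, G₁ j ω)) :
    ∫ ω, ‖gbar₂ - vnew ω‖^2 ∂μ
      ≤ (1 - ϱ) * ∫ ω, ‖gbar₁ - vold ω‖^2 ∂μ + (2/(b:ℝ)) * Δ^2 + 2 * ϱ^2 * δ^2 / b := by
  have hG₂ : ∀ j, MemLp (G₂ j) 2 μ := fun j ↦
    memLp_two_of_integrable_norm_sub_sq (hint₂ j).1 (hint2₂ j)
  have hG₁ : ∀ j, MemLp (G₁ j) 2 μ := fun j ↦ (hG₂ j).of_ae_norm_sub_sq_le (hint₁ j).1 (hdrift j)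
  have hA : MemLp (fun ω ↦ gbar₁ - vold ω) 2 μ :=
    (memLp_two_iff_integrable_sq_norm (measurable_const.sub hmeasv).aestronglyMeasurable).2 hintv2
  simp_rw [hvnew]
  rw [integral_norm_sub_momentum_update_sq hb.ne' ϱ hG₁ hG₂ hA hunb₁ hunb₂
    (fun j l hjl ↦ hiid.indepFun hjl) (fun j ↦ hindep.comp measurable_id (measurable_pi_apply j))]
  calc _ ≤ (1 - ϱ) * ∫ ω, ‖gbar₁ - vold ω‖ ^ 2 ∂μ
          + (1 / (b : ℝ)) ^ 2 * ∑ _j : Fin b, (2 * ϱ ^ 2 * δ ^ 2 + 2 * Δ ^ 2) := by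
        gcongr with j
        · exact pow_le_of_le_one (sub_nonneg.2 hϱ1) (by linarith) two_ne_zero
        · exact integral_norm_momentum_sample_error_sq_le (hG₂ j) (hG₁ j) (hunb₂ j) (hunb₁ j)
            hϱ0.le hϱ1 (hvar j) (hdrift j)
    _ = _ := by
        simp only [Finset.sum_const, Finset.card_univ, Fintype.card_fin, nsmul_eq_mul]
        field_simp
        ring

/-- STORM-type variance-reduction recursion (single step). `G₁ j`, `G₂ j` are the
per-sample zeroth-order estimates at the old and new iterates, `gbar₁`, `gbar₂`
the deterministic quantities they estimate, `vold` the previous momentum estimator,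
and `vnew` the updated one built from the fresh mini-batch of size `b`. -/
theorem stmt_18 {Ω : Type*} [MeasurableSpace Ω] (μ : Measure Ω) [IsProbabilityMeasure μ]
    (d b : ℕ) (hb : 0 < b) (δ Δ ϱ : ℝ) (hδ : 0 ≤ δ) (hΔ : 0 ≤ Δ)
    (hϱ0 : 0 < ϱ) (hϱ1 : ϱ ≤ 1)
    (G₁ G₂ : Fin b → Ω → EuclideanSpace ℝ (Fin d))
    (gbar₁ gbar₂ : EuclideanSpace ℝ (Fin d))
    (vold : Ω → EuclideanSpace ℝ (Fin d))
    (hmeas₁ : ∀ j, Measurable (G₁ j)) (hmeas₂ : ∀ j, Measurable (G₂ j))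
    (hmeasv : Measurable vold)
    (hint₁ : ∀ j, Integrable (G₁ j) μ) (hint₂ : ∀ j, Integrable (G₂ j) μ)
    (hintv2 : Integrable (fun ω => ‖gbar₁ - vold ω‖^2) μ)
    (hint2₂ : ∀ j, Integrable (fun ω => ‖G₂ j ω - gbar₂‖^2) μ)
    -- conditional (here: full) unbiasedness of the per-sample estimates
    (hunb₁ : ∀ j, ∫ ω, G₁ j ω ∂μ = gbar₁)
    (hunb₂ : ∀ j, ∫ ω, G₂ j ω ∂μ = gbar₂)
    -- per-sample variance bound
    (hvar : ∀ j, ∫ ω, ‖G₂ j ω - gbar₂‖^2 ∂μ ≤ δ^2)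
    -- almost-sure bound on the per-sample drift between consecutive iterates
    (hdrift : ∀ j, ∀ᵐ ω ∂μ, ‖G₂ j ω - G₁ j ω‖^2 ≤ Δ^2)
    -- the per-sample pairs are jointly independent across the batch
    (hiid : iIndepFun
      (fun j => fun ω => (G₁ j ω, G₂ j ω)) μ)
    -- the fresh batch is independent of the previous estimator
    (hindep : IndepFun vold (fun ω => fun j : Fin b => (G₁ j ω, G₂ j ω)) μ)
    (vnew : Ω → EuclideanSpace ℝ (Fin d))
    (hvnew : ∀ ω, vnew ω
      = (1/(b:ℝ)) • ∑ j, G₂ j ω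
        + (1 - ϱ) • (vold ω - (1/(b:ℝ)) • ∑ j, G₁ j ω)) :
    ∫ ω, ‖gbar₂ - vnew ω‖^2 ∂μ
      ≤ (1 - ϱ) * ∫ ω, ‖gbar₁ - vold ω‖^2 ∂μ + (2/(b:ℝ)) * Δ^2 + 2 * ϱ^2 * δ^2 / b :=
  stmt_18_general μ d b hb δ Δ ϱ hϱ0 hϱ1 G₁ G₂ gbar₁ gbar₂ vold hmeasv hint₁ hint₂ hintv2 hint2₂
    hunb₁ hunb₂ hvar hdrift hiid hindep vnew hvnew
end
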